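/- arXiv:1006.0659 — 6 statements merged into one kernel-verified Lean document; each statement's English description precedes it below -/
import Mathlib

section
/- Under the Markov chain X–Y–Z, the mixed information satisfies the divergence decomposition I'(X;Z) = I(X;Y) − Σ_{y,z} P_{YZ}(y,z) · D(P_{X|Y=y} ‖ Q(·|z)), where the rightmost term is the expected Kullback–Leibler divergence from the true a-posteriori distribution given Y to the model distribution given Z. -/
open Finset Real

theorem stmt1 {𝒳 𝒴 𝒵 : Type*} [Fintype 𝒳] [Fintype 𝒴] [Fintype 𝒵]
    [Nonempty 𝒳] [Nonempty 𝒴] [Nonempty 𝒵]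
    (P : 𝒳 → 𝒴 → 𝒵 → ℝ)
    (hPnn : ∀ x y z, 0 ≤ P x y z)
    (hPsum : ∑ x, ∑ y, ∑ z, P x y z = 1)
    (PX : 𝒳 → ℝ) (hPX : ∀ x, PX x = ∑ y, ∑ z, P x y z)
    (PY : 𝒴 → ℝ) (hPY : ∀ y, PY y = ∑ x, ∑ z, P x y z)
    (PZ : 𝒵 → ℝ) (hPZ : ∀ z, PZ z = ∑ x, ∑ y, P x y z)
    (PXY : 𝒳 → 𝒴 → ℝ) (hPXY : ∀ x y, PXY x y = ∑ z, P x y z)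
    (PXZ : 𝒳 → 𝒵 → ℝ) (hPXZ : ∀ x z, PXZ x z = ∑ y, P x y z)
    (PYZ : 𝒴 → 𝒵 → ℝ) (hPYZ : ∀ y z, PYZ y z = ∑ x, P x y z)
    (hMarkov : ∀ x y z, P x y z * PY y = PXY x y * PYZ y z)
    (PXgY : 𝒳 → 𝒴 → ℝ) (hPXgY : ∀ x y, 0 < PY y → PXgY x y = PXY x y / PY y)
    (Q : 𝒵 → 𝒳 → ℝ)
    (hQnn : ∀ z x, 0 ≤ Q z x)
    (hQsum : ∀ z, ∑ x, Q z x = 1)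
    (hQpos : ∀ x z, 0 < PXZ x z → 0 < Q z x)
    : (∑ x, ∑ z, PXZ x z * logb 2 (Q z x / PX x))
      = (∑ x, ∑ y, PXY x y * logb 2 (PXY x y / (PX x * PY y))) - (∑ y, ∑ z, PYZ y z * (∑ x, PXgY x y * logb 2 (PXgY x y / Q z x))) := by
  classical
  -- LHS as triple sum
  have L : (∑ x, ∑ z, PXZ x z * logb 2 (Q z x / PX x))
      = ∑ x, ∑ y, ∑ z, P x y z * logb 2 (Q z x / PX x) := by
    refine Finset.sum_congr rfl fun x _ => ?_
    rw [Finset.sum_comm]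
    refine Finset.sum_congr rfl fun z _ => ?_
    rw [hPXZ, Finset.sum_mul]
  -- I(X;Y) as triple sum
  have R1 : (∑ x, ∑ y, PXY x y * logb 2 (PXY x y / (PX x * PY y)))
      = ∑ x, ∑ y, ∑ z, P x y z * logb 2 (PXY x y / (PX x * PY y)) := by
    refine Finset.sum_congr rfl fun x _ => Finset.sum_congr rfl fun y _ => ?_
    rw [hPXY, Finset.sum_mul]
  -- P x y z = 0 when PY y = 0
  have hPzero : ∀ x y z, PY y = 0 → P x y z = 0 := by
    intro x y z h
    have h0 : ∑ x, ∑ z, P x y z = 0 := by rw [← hPY]; exact h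
    have h1 : (∑ z, P x y z) = 0 := by
      have := (Finset.sum_eq_zero_iff_of_nonneg (fun x _ =>
        Finset.sum_nonneg fun z _ => hPnn x y z)).mp h0 x (Finset.mem_univ x)
      exact this
    exact (Finset.sum_eq_zero_iff_of_nonneg (fun z _ => hPnn x y z)).mp h1 z (Finset.mem_univ z)
  -- KL term as triple sum
  have R2 : (∑ y, ∑ z, PYZ y z * (∑ x, PXgY x y * logb 2 (PXgY x y / Q z x)))
      = ∑ x, ∑ y, ∑ z, P x y z * logb 2 (PXgY x y / Q z x) := by
    rw [Finset.sum_comm]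
    have : ∀ z, (∑ y, PYZ y z * (∑ x, PXgY x y * logb 2 (PXgY x y / Q z x)))
        = ∑ y, ∑ x, P x y z * logb 2 (PXgY x y / Q z x) := by
      intro z
      refine Finset.sum_congr rfl fun y _ => ?_
      rw [Finset.mul_sum]
      refine Finset.sum_congr rfl fun x _ => ?_
      rcases eq_or_lt_of_le (hPY y ▸ Finset.sum_nonneg fun x _ =>
          Finset.sum_nonneg fun z _ => hPnn x y z : (0:ℝ) ≤ PY y) with h | h
      · have hP0 : P x y z = 0 := hPzero x y z h.symm
        have hYZ0 : PYZ y z = 0 := by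
          rw [hPYZ]; exact Finset.sum_eq_zero fun x _ => hPzero x y z h.symm
        rw [hP0, hYZ0]; ring
      · have hXgY := hPXgY x y h
        have hM := hMarkov x y z
        have : PYZ y z * PXgY x y = P x y z := by
          rw [hXgY]
          field_simp
          linarith [hM]
        rw [← mul_assoc, this]
    calc (∑ z, ∑ y, PYZ y z * (∑ x, PXgY x y * logb 2 (PXgY x y / Q z x)))
        = ∑ z, ∑ y, ∑ x, P x y z * logb 2 (PXgY x y / Q z x) :=
          Finset.sum_congr rfl fun z _ => this z
      _ = ∑ z, ∑ x, ∑ y, P x y z * logb 2 (PXgY x y / Q z x) :=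
          Finset.sum_congr rfl fun z _ => Finset.sum_comm
      _ = ∑ x, ∑ z, ∑ y, P x y z * logb 2 (PXgY x y / Q z x) := Finset.sum_comm
      _ = ∑ x, ∑ y, ∑ z, P x y z * logb 2 (PXgY x y / Q z x) :=
          Finset.sum_congr rfl fun x _ => Finset.sum_comm
  rw [L, R1, R2]
  have step : (∑ x, ∑ y, ∑ z, P x y z * logb 2 (Q z x / PX x))
      = ∑ x, ∑ y, ∑ z, (P x y z * logb 2 (PXY x y / (PX x * PY y))
        - P x y z * logb 2 (PXgY x y / Q z x)) := by
    refine Finset.sum_congr rfl fun x _ => ?_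
    refine Finset.sum_congr rfl fun y _ => ?_
    refine Finset.sum_congr rfl fun z _ => ?_
    rcases eq_or_lt_of_le (hPnn x y z) with h | h
    · rw [← h]; ring
    · have hPYpos : 0 < PY y := by
        rw [hPY]
        refine Finset.sum_pos' (fun a _ => Finset.sum_nonneg fun b _ => hPnn a y b) ?_
        exact ⟨x, Finset.mem_univ x, Finset.sum_pos' (fun b _ => hPnn x y b)
          ⟨z, Finset.mem_univ z, h⟩⟩
      have hPXpos : 0 < PX x := by
        rw [hPX]
        refine Finset.sum_pos' (fun a _ => Finset.sum_nonneg fun b _ => hPnn x a b) ?_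
        exact ⟨y, Finset.mem_univ y, Finset.sum_pos' (fun b _ => hPnn x y b)
          ⟨z, Finset.mem_univ z, h⟩⟩
      have hPXYpos : 0 < PXY x y := by
        rw [hPXY]
        exact Finset.sum_pos' (fun b _ => hPnn x y b) ⟨z, Finset.mem_univ z, h⟩
      have hPXZpos : 0 < PXZ x z := by
        rw [hPXZ]
        exact Finset.sum_pos' (fun b _ => hPnn x b z) ⟨y, Finset.mem_univ y, h⟩
      have hQp : 0 < Q z x := hQpos x z hPXZpos
      have hXgY := hPXgY x y hPYpos
      rw [hXgY, ← mul_sub]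
      congr 1
      rw [logb_div hQp.ne' hPXpos.ne',
          logb_div hPXYpos.ne' (by positivity : (PX x * PY y) ≠ 0),
          logb_mul hPXpos.ne' hPYpos.ne',
          logb_div (by positivity : (PXY x y / PY y) ≠ 0) hQp.ne',
          logb_div hPXYpos.ne' hPYpos.ne']
      ring
  rw [step]
  simp only [Finset.sum_sub_distrib]
end

section
/- (Theorem 1, inequality) Under the Markov chain X–Y–Z, the mixed information is upper bounded by the channel mutual information: I'(X;Z) ≤ I(X;Y). -/
/-!
Both informations are averages over the triple `(x, y, z)` drawn from `P`. For fixed `y, z`, the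
Markov property `P(x,y,z) P_Y(y) = P_XY(x,y) P_YZ(y,z)` turns the difference of the two integrands
into `log₂ (P(x,y,z) / (P_YZ(y,z) Q(x|z)))`. The weights `P_YZ(y,z) Q(·|z)` have the same total mass
`P_YZ(y,z)` as `P(·,y,z)`, so the `x`-sum of these terms is a relative entropy and nonnegative by
Gibbs' inequality.
-/

open Finset Real

lemma sub_le_mul_log_div {p q : ℝ} (hp : 0 ≤ p) (hq : 0 ≤ q) (hpq : 0 < p → 0 < q) :
    p - q ≤ p * log (p / q) := by
  rcases hp.eq_or_lt with rfl | hp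
  · simpa using hq
  have hq := hpq hp
  have hlog := one_sub_inv_le_log_of_pos (div_pos hp hq)
  rw [inv_div] at hlog
  calc p - q = p * (1 - q / p) := by field_simp
    _ ≤ p * log (p / q) := by gcongr

lemma sum_mul_logb_div_nonneg {ι : Type*} {s : Finset ι} {p q : ι → ℝ} {b : ℝ} (hb : 1 < b)
    (hp : ∀ i ∈ s, 0 ≤ p i) (hq : ∀ i ∈ s, 0 ≤ q i) (hpq : ∀ i ∈ s, 0 < p i → 0 < q i)
    (hsum : ∑ i ∈ s, q i ≤ ∑ i ∈ s, p i) :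
    0 ≤ ∑ i ∈ s, p i * logb b (p i / q i) := by
  have hlog : 0 ≤ ∑ i ∈ s, p i * log (p i / q i) :=
    calc 0 ≤ ∑ i ∈ s, (p i - q i) := by rw [sum_sub_distrib]; linarith
      _ ≤ _ := sum_le_sum fun i hi => sub_le_mul_log_div (hp i hi) (hq i hi) (hpq i hi)
  simp_rw [logb, ← mul_div_assoc, ← sum_div]
  exact div_nonneg hlog (log_nonneg hb.le)

lemma logb_div_sub_logb_div_of_mul_eq_mul {b p pxy px py pyz q : ℝ}
    (hpxy : 0 < pxy) (hpx : 0 < px) (hpy : 0 < py) (hpyz : 0 < pyz) (hq : 0 < q)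
    (hM : p * py = pxy * pyz) :
    logb b (pxy / (px * py)) - logb b (q / px) = logb b (p / (pyz * q)) := by
  rw [← logb_div (by positivity) (by positivity)]
  congr 1
  field_simp
  linear_combination -hM

/-- The inequality for a fixed pair `(y, z)`: here `p i = P(i,y,z)`, `pxy i = P_XY(i,y)`,
`px i = P_X(i)`, `py = P_Y(y)`, `pyz = P_YZ(y,z)` and `q = Q(·|z)`. -/
lemma sum_mul_logb_le_of_mul_eq_mul {ι : Type*} {s : Finset ι} {b : ℝ} (hb : 1 < b)
    {p pxy px q : ι → ℝ} {py pyz : ℝ}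
    (hp : ∀ i ∈ s, 0 ≤ p i) (hq : ∀ i ∈ s, 0 ≤ q i) (hqsum : ∑ i ∈ s, q i = 1)
    (hpyz : pyz = ∑ i ∈ s, p i)
    (hpos : ∀ i ∈ s, 0 < p i → 0 < pxy i ∧ 0 < px i ∧ 0 < py ∧ 0 < q i)
    (hM : ∀ i ∈ s, p i * py = pxy i * pyz) :
    ∑ i ∈ s, p i * logb b (q i / px i) ≤ ∑ i ∈ s, p i * logb b (pxy i / (px i * py)) := by
  have hp_le : ∀ i ∈ s, p i ≤ pyz := fun i hi => hpyz ▸ single_le_sum hp hi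
  have hterm : ∀ i ∈ s, p i * logb b (pxy i / (px i * py)) - p i * logb b (q i / px i)
      = p i * logb b (p i / (pyz * q i)) := by
    intro i hi
    rcases (hp i hi).eq_or_lt with h0 | hpi
    · simp [← h0]
    obtain ⟨hpxy, hpx, hpy, hqi⟩ := hpos i hi hpi
    rw [← mul_sub, logb_div_sub_logb_div_of_mul_eq_mul hpxy hpx hpy
      (hpi.trans_le (hp_le i hi)) hqi (hM i hi)]
  rw [← sub_nonneg, ← sum_sub_distrib, sum_congr rfl hterm]
  refine sum_mul_logb_div_nonneg hb hp
    (fun i hi => mul_nonneg ((hp i hi).trans (hp_le i hi)) (hq i hi))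
    (fun i hi hpi => mul_pos (hpi.trans_le (hp_le i hi)) (hpos i hi hpi).2.2.2) ?_
  rw [← mul_sum, hqsum, mul_one, hpyz]

section Rearrangement

variable {α β γ : Type*} [Fintype α] [Fintype β] [Fintype γ] (P : α → β → γ → ℝ)

lemma sum_sum_marginal₁₃_mul (f : α → γ → ℝ) :
    ∑ x, ∑ z, (∑ y, P x y z) * f x z = ∑ y, ∑ z, ∑ x, P x y z * f x z := by
  simp_rw [sum_mul]
  rw [sum_comm_cycle]
  exact sum_congr rfl fun _ _ => sum_comm

lemma sum_sum_marginal₁₂_mul (f : α → β → ℝ) :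
    ∑ x, ∑ y, (∑ z, P x y z) * f x y = ∑ y, ∑ z, ∑ x, P x y z * f x y := by
  simp_rw [sum_mul]
  rw [← sum_comm_cycle]

end Rearrangement

lemma le_sum_sum {α β : Type*} [Fintype α] [Fintype β] {f : α → β → ℝ}
    (hf : ∀ a b, 0 ≤ f a b) (a : α) (b : β) : f a b ≤ ∑ a, ∑ b, f a b :=
  (single_le_sum (fun b _ => hf a b) (mem_univ b)).trans
    (single_le_sum (fun a _ => sum_nonneg fun b _ => hf a b) (mem_univ a))

theorem stmt2_general {𝒳 𝒴 𝒵 : Type*} [Fintype 𝒳] [Fintype 𝒴] [Fintype 𝒵]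
    (P : 𝒳 → 𝒴 → 𝒵 → ℝ)
    (hPnn : ∀ x y z, 0 ≤ P x y z)
    (PX : 𝒳 → ℝ) (hPX : ∀ x, PX x = ∑ y, ∑ z, P x y z)
    (PY : 𝒴 → ℝ) (hPY : ∀ y, PY y = ∑ x, ∑ z, P x y z)
    (PXY : 𝒳 → 𝒴 → ℝ) (hPXY : ∀ x y, PXY x y = ∑ z, P x y z)
    (PXZ : 𝒳 → 𝒵 → ℝ) (hPXZ : ∀ x z, PXZ x z = ∑ y, P x y z)
    (PYZ : 𝒴 → 𝒵 → ℝ) (hPYZ : ∀ y z, PYZ y z = ∑ x, P x y z)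
    (hMarkov : ∀ x y z, P x y z * PY y = PXY x y * PYZ y z)
    (Q : 𝒵 → 𝒳 → ℝ)
    (hQnn : ∀ z x, 0 ≤ Q z x)
    (hQsum : ∀ z, ∑ x, Q z x = 1)
    (hQpos : ∀ x z, 0 < PXZ x z → 0 < Q z x)
    : (∑ x, ∑ z, PXZ x z * logb 2 (Q z x / PX x)) ≤ (∑ x, ∑ y, PXY x y * logb 2 (PXY x y / (PX x * PY y))) := by
  have hpos : ∀ x y z, 0 < P x y z → 0 < PXY x y ∧ 0 < PX x ∧ 0 < PY y ∧ 0 < Q z x :=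
    fun x y z h => ⟨h.trans_le <| hPXY x y ▸ single_le_sum (fun z _ => hPnn x y z) (mem_univ z),
      h.trans_le <| hPX x ▸ le_sum_sum (hPnn x) y z,
      h.trans_le <| hPY y ▸ le_sum_sum (fun x z => hPnn x y z) x z,
      hQpos x z <| h.trans_le <| hPXZ x z ▸ single_le_sum (fun y _ => hPnn x y z) (mem_univ y)⟩
  have hL : ∑ x, ∑ z, PXZ x z * logb 2 (Q z x / PX x)
      = ∑ y, ∑ z, ∑ x, P x y z * logb 2 (Q z x / PX x) := by
    simp only [hPXZ, sum_sum_marginal₁₃_mul P]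
  have hR : ∑ x, ∑ y, PXY x y * logb 2 (PXY x y / (PX x * PY y))
      = ∑ y, ∑ z, ∑ x, P x y z * logb 2 (PXY x y / (PX x * PY y)) := by
    simpa only [← hPXY] using sum_sum_marginal₁₂_mul P fun x y => logb 2 (PXY x y / (PX x * PY y))
  rw [hL, hR]
  exact sum_le_sum fun y _ => sum_le_sum fun z _ =>
    sum_mul_logb_le_of_mul_eq_mul one_lt_two (fun x _ => hPnn x y z) (fun x _ => hQnn z x)
      (hQsum z) (hPYZ y z) (fun x _ => hpos x y z) (fun x _ => hMarkov x y z)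

theorem stmt2 {𝒳 𝒴 𝒵 : Type*} [Fintype 𝒳] [Fintype 𝒴] [Fintype 𝒵]
    [Nonempty 𝒳] [Nonempty 𝒴] [Nonempty 𝒵]
    (P : 𝒳 → 𝒴 → 𝒵 → ℝ)
    (hPnn : ∀ x y z, 0 ≤ P x y z)
    (hPsum : ∑ x, ∑ y, ∑ z, P x y z = 1)
    (PX : 𝒳 → ℝ) (hPX : ∀ x, PX x = ∑ y, ∑ z, P x y z)
    (PY : 𝒴 → ℝ) (hPY : ∀ y, PY y = ∑ x, ∑ z, P x y z)
    (PZ : 𝒵 → ℝ) (hPZ : ∀ z, PZ z = ∑ x, ∑ y, P x y z)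
    (PXY : 𝒳 → 𝒴 → ℝ) (hPXY : ∀ x y, PXY x y = ∑ z, P x y z)
    (PXZ : 𝒳 → 𝒵 → ℝ) (hPXZ : ∀ x z, PXZ x z = ∑ y, P x y z)
    (PYZ : 𝒴 → 𝒵 → ℝ) (hPYZ : ∀ y z, PYZ y z = ∑ x, P x y z)
    (hMarkov : ∀ x y z, P x y z * PY y = PXY x y * PYZ y z)
    (Q : 𝒵 → 𝒳 → ℝ)
    (hQnn : ∀ z x, 0 ≤ Q z x)
    (hQsum : ∀ z, ∑ x, Q z x = 1)
    (hQpos : ∀ x z, 0 < PXZ x z → 0 < Q z x)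
    : (∑ x, ∑ z, PXZ x z * logb 2 (Q z x / PX x)) ≤ (∑ x, ∑ y, PXY x y * logb 2 (PXY x y / (PX x * PY y))) :=
  stmt2_general P hPnn PX hPX PY hPY PXY hPXY PXZ hPXZ PYZ hPYZ hMarkov Q hQnn hQsum hQpos
end

section
/- (Theorem 1, equality condition) Under the Markov chain X–Y–Z, the mixed information equals the channel mutual information, I'(X;Z) = I(X;Y), if and only if for every pair (y,z) with P_{YZ}(y,z) > 0 the model distribution matches the true a-posteriori distribution given Y, i.e., Q(x|z) = P_{X|Y}(x|y) for all x ∈ 𝒳. -/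
open Finset Real

/-- Gibbs' inequality with equality condition, for finite probability vectors. -/
lemma gibbs_aux {ι : Type*} [Fintype ι] (p q : ι → ℝ)
    (hp : ∀ i, 0 ≤ p i) (hq : ∀ i, 0 ≤ q i)
    (hps : ∑ i, p i = 1) (hqs : ∑ i, q i = 1)
    (hsupp : ∀ i, 0 < p i → 0 < q i) :
    0 ≤ ∑ i, p i * logb 2 (p i / q i) ∧
      ((∑ i, p i * logb 2 (p i / q i)) = 0 ↔ ∀ i, q i = p i) := by
  have key : ∀ i, p i * Real.log (q i / p i) ≤ q i - p i := by
    intro i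
    rcases eq_or_lt_of_le (hp i) with h | h
    · simp [← h]
      exact hq i
    · have hqi := hsupp i h
      have h1 := Real.log_le_sub_one_of_pos (div_pos hqi h)
      have h2 := mul_le_mul_of_nonneg_left h1 h.le
      calc p i * Real.log (q i / p i) ≤ p i * (q i / p i - 1) := h2
        _ = q i - p i := by field_simp
  have hzero : ∑ i, (q i - p i) = 0 := by
    rw [Finset.sum_sub_distrib, hps, hqs]; ring
  have hS : ∑ i, p i * Real.log (q i / p i) ≤ 0 := by
    calc ∑ i, p i * Real.log (q i / p i) ≤ ∑ i, (q i - p i) :=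
          Finset.sum_le_sum fun i _ => key i
      _ = 0 := hzero
  have hrel : ∀ i, p i * logb 2 (p i / q i) = -(p i * Real.log (q i / p i)) / Real.log 2 := by
    intro i
    rcases eq_or_lt_of_le (hp i) with h | h
    · simp [← h]
    · have hqi := hsupp i h
      rw [Real.logb, Real.log_div h.ne' hqi.ne', Real.log_div hqi.ne' h.ne']
      ring
  have log2pos : (0:ℝ) < Real.log 2 := Real.log_pos (by norm_num)
  have htot : ∑ i, p i * logb 2 (p i / q i)
      = -(∑ i, p i * Real.log (q i / p i)) / Real.log 2 := by
    rw [Finset.sum_congr rfl fun i _ => hrel i, ← Finset.sum_div, ← Finset.sum_neg_distrib]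
  constructor
  · rw [htot]
    apply div_nonneg _ log2pos.le
    linarith
  · rw [htot]
    have hdiv : -(∑ i, p i * Real.log (q i / p i)) / Real.log 2 = 0
        ↔ ∑ i, p i * Real.log (q i / p i) = 0 := by
      rw [div_eq_zero_iff]
      constructor
      · rintro (h | h)
        · linarith
        · exact absurd h log2pos.ne'
      · intro h; left; rw [h]; ring
    rw [hdiv]
    have heqiff : ∑ i, p i * Real.log (q i / p i) = 0
        ↔ ∀ i, p i * Real.log (q i / p i) = q i - p i := by
      constructor
      · intro h
        have := (Finset.sum_eq_sum_iff_of_le (fun i _ => key i)).mp (by rw [h, hzero])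
        exact fun i => this i (mem_univ i)
      · intro h
        rw [Finset.sum_congr rfl fun i _ => h i, hzero]
    rw [heqiff]
    constructor
    · intro h i
      rcases eq_or_lt_of_le (hp i) with hpi | hpi
      · have := h i
        rw [← hpi] at this
        simp at this
        rw [← this, ← hpi]
      · have hqi := hsupp i hpi
        by_contra hne
        have hne' : q i / p i ≠ 1 := by
          intro hc
          exact hne (by field_simp at hc; linarith)
        have hstrict := Real.log_lt_sub_one_of_pos (div_pos hqi hpi) hne'
        have h2 : p i * Real.log (q i / p i) < p i * (q i / p i - 1) :=
          (mul_lt_mul_iff_right₀ hpi).mpr hstrict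
        have h3 : p i * (q i / p i - 1) = q i - p i := by field_simp
        rw [h3] at h2
        exact absurd (h i) (ne_of_lt h2)
    · intro h i
      rw [h i]
      rcases eq_or_lt_of_le (hp i) with hpi | hpi
      · simp [← hpi]
      · rw [div_self hpi.ne', Real.log_one]
        ring

theorem stmt3 {𝒳 𝒴 𝒵 : Type*} [Fintype 𝒳] [Fintype 𝒴] [Fintype 𝒵]
    [Nonempty 𝒳] [Nonempty 𝒴] [Nonempty 𝒵]
    (P : 𝒳 → 𝒴 → 𝒵 → ℝ)
    (hPnn : ∀ x y z, 0 ≤ P x y z)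
    (hPsum : ∑ x, ∑ y, ∑ z, P x y z = 1)
    (PX : 𝒳 → ℝ) (hPX : ∀ x, PX x = ∑ y, ∑ z, P x y z)
    (PY : 𝒴 → ℝ) (hPY : ∀ y, PY y = ∑ x, ∑ z, P x y z)
    (PZ : 𝒵 → ℝ) (hPZ : ∀ z, PZ z = ∑ x, ∑ y, P x y z)
    (PXY : 𝒳 → 𝒴 → ℝ) (hPXY : ∀ x y, PXY x y = ∑ z, P x y z)
    (PXZ : 𝒳 → 𝒵 → ℝ) (hPXZ : ∀ x z, PXZ x z = ∑ y, P x y z)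
    (PYZ : 𝒴 → 𝒵 → ℝ) (hPYZ : ∀ y z, PYZ y z = ∑ x, P x y z)
    (hMarkov : ∀ x y z, P x y z * PY y = PXY x y * PYZ y z)
    (PXgY : 𝒳 → 𝒴 → ℝ) (hPXgY : ∀ x y, 0 < PY y → PXgY x y = PXY x y / PY y)
    (Q : 𝒵 → 𝒳 → ℝ)
    (hQnn : ∀ z x, 0 ≤ Q z x)
    (hQsum : ∀ z, ∑ x, Q z x = 1)
    (hQpos : ∀ x z, 0 < PXZ x z → 0 < Q z x)
    : ((∑ x, ∑ z, PXZ x z * logb 2 (Q z x / PX x)) = (∑ x, ∑ y, PXY x y * logb 2 (PXY x y / (PX x * PY y))))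
      ↔ ∀ y z, 0 < PYZ y z → ∀ x, Q z x = PXgY x y := by
  -- basic nonnegativity facts
  have hPXYnn : ∀ x y, 0 ≤ PXY x y := fun x y => by
    rw [hPXY]; exact Finset.sum_nonneg fun z _ => hPnn x y z
  have hPYZnn : ∀ y z, 0 ≤ PYZ y z := fun y z => by
    rw [hPYZ]; exact Finset.sum_nonneg fun x _ => hPnn x y z
  have hP_le_PYZ : ∀ x y z, P x y z ≤ PYZ y z := fun x y z => by
    rw [hPYZ]; exact Finset.single_le_sum (fun x' _ => hPnn x' y z) (mem_univ x)
  have hP_le_PXZ : ∀ x y z, P x y z ≤ PXZ x z := fun x y z => by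
    rw [hPXZ]; exact Finset.single_le_sum (fun y' _ => hPnn x y' z) (mem_univ y)
  have hP_le_PXY : ∀ x y z, P x y z ≤ PXY x y := fun x y z => by
    rw [hPXY]; exact Finset.single_le_sum (fun z' _ => hPnn x y z') (mem_univ z)
  have hP_le_PX : ∀ x y z, P x y z ≤ PX x := fun x y z => by
    rw [hPX]
    calc P x y z ≤ ∑ z', P x y z' :=
          Finset.single_le_sum (fun z' _ => hPnn x y z') (mem_univ z)
      _ ≤ ∑ y', ∑ z', P x y' z' :=
          Finset.single_le_sum
            (fun y' _ => Finset.sum_nonneg fun z' _ => hPnn x y' z') (mem_univ y)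
  have hPYsum : ∀ y, PY y = ∑ x, PXY x y := fun y => by
    rw [hPY]; exact Finset.sum_congr rfl fun x _ => (hPXY x y).symm
  have hPYZsum : ∀ y, PY y = ∑ z, PYZ y z := fun y => by
    rw [hPY, Finset.sum_comm]
    exact Finset.sum_congr rfl fun z _ => (hPYZ y z).symm
  have hPYZ_le_PY : ∀ y z, PYZ y z ≤ PY y := fun y z => by
    rw [hPYZsum]
    exact Finset.single_le_sum (fun z' _ => hPYZnn y z') (mem_univ z)
  -- rewrite the two informations as triple sums
  have hI' : (∑ x, ∑ z, PXZ x z * logb 2 (Q z x / PX x))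
      = ∑ x, ∑ y, ∑ z, P x y z * logb 2 (Q z x / PX x) := by
    refine Finset.sum_congr rfl fun x _ => ?_
    calc ∑ z, PXZ x z * logb 2 (Q z x / PX x)
        = ∑ z, ∑ y, P x y z * logb 2 (Q z x / PX x) := by
          refine Finset.sum_congr rfl fun z _ => ?_
          rw [hPXZ, Finset.sum_mul]
      _ = ∑ y, ∑ z, P x y z * logb 2 (Q z x / PX x) := Finset.sum_comm
  have hI : (∑ x, ∑ y, PXY x y * logb 2 (PXY x y / (PX x * PY y)))
      = ∑ x, ∑ y, ∑ z, P x y z * logb 2 (PXY x y / (PX x * PY y)) := by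
    refine Finset.sum_congr rfl fun x _ => Finset.sum_congr rfl fun y _ => ?_
    rw [hPXY, Finset.sum_mul]
  -- termwise identity
  have hterm : ∀ x y z,
      P x y z * logb 2 (PXY x y / (PX x * PY y)) - P x y z * logb 2 (Q z x / PX x)
        = PYZ y z * (PXgY x y * logb 2 (PXgY x y / Q z x)) := by
    intro x y z
    rcases eq_or_lt_of_le (hPYZnn y z) with hyz | hyz
    · have hp0 : P x y z = 0 :=
        le_antisymm (le_trans (hP_le_PYZ x y z) (le_of_eq hyz.symm)) (hPnn x y z)
      simp [hp0, ← hyz]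
    · have hPYpos : 0 < PY y := lt_of_lt_of_le hyz (hPYZ_le_PY y z)
      have hPxy : P x y z = PXgY x y * PYZ y z := by
        rw [hPXgY x y hPYpos]
        have hm := hMarkov x y z
        field_simp
        linarith
      rcases eq_or_lt_of_le (hPnn x y z) with hp0 | hppos
      · have hxg0 : PXgY x y = 0 := by
          have hmul : PXgY x y * PYZ y z = 0 := by rw [← hPxy, ← hp0]
          rcases mul_eq_zero.mp hmul with h | h
          · exact h
          · exact absurd h hyz.ne'
        simp [← hp0, hxg0]
      · have hPXpos : 0 < PX x := lt_of_lt_of_le hppos (hP_le_PX x y z)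
        have hPXYpos : 0 < PXY x y := lt_of_lt_of_le hppos (hP_le_PXY x y z)
        have hPXZpos : 0 < PXZ x z := lt_of_lt_of_le hppos (hP_le_PXZ x y z)
        have hQp := hQpos x z hPXZpos
        have hPXgYpos : 0 < PXgY x y := by
          rw [hPXgY x y hPYpos]; positivity
        have hc : logb 2 (PXY x y / (PX x * PY y)) - logb 2 (Q z x / PX x)
            = logb 2 (PXgY x y / Q z x) := by
          rw [← Real.logb_div (by positivity) (by positivity)]
          congr 1
          rw [hPXgY x y hPYpos]
          field_simp
        rw [← mul_sub, hc, hPxy]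
        ring
  -- the key difference identity
  have hdiff : (∑ x, ∑ y, PXY x y * logb 2 (PXY x y / (PX x * PY y)))
      - (∑ x, ∑ z, PXZ x z * logb 2 (Q z x / PX x))
      = ∑ y, ∑ z, PYZ y z * ∑ x, PXgY x y * logb 2 (PXgY x y / Q z x) := by
    rw [hI, hI']
    calc (∑ x, ∑ y, ∑ z, P x y z * logb 2 (PXY x y / (PX x * PY y)))
        - ∑ x, ∑ y, ∑ z, P x y z * logb 2 (Q z x / PX x)
        = ∑ x, ∑ y, ∑ z, (P x y z * logb 2 (PXY x y / (PX x * PY y))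
            - P x y z * logb 2 (Q z x / PX x)) := by
          simp only [Finset.sum_sub_distrib]
      _ = ∑ x, ∑ y, ∑ z, PYZ y z * (PXgY x y * logb 2 (PXgY x y / Q z x)) := by
          exact Finset.sum_congr rfl fun x _ => Finset.sum_congr rfl fun y _ =>
            Finset.sum_congr rfl fun z _ => hterm x y z
      _ = ∑ y, ∑ x, ∑ z, PYZ y z * (PXgY x y * logb 2 (PXgY x y / Q z x)) :=
          Finset.sum_comm
      _ = ∑ y, ∑ z, ∑ x, PYZ y z * (PXgY x y * logb 2 (PXgY x y / Q z x)) :=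
          Finset.sum_congr rfl fun y _ => Finset.sum_comm
      _ = ∑ y, ∑ z, PYZ y z * ∑ x, PXgY x y * logb 2 (PXgY x y / Q z x) := by
          refine Finset.sum_congr rfl fun y _ => Finset.sum_congr rfl fun z _ => ?_
          rw [Finset.mul_sum]
  -- Gibbs applied to each (y,z) with PYZ y z > 0
  have hgibbs : ∀ y z, 0 < PYZ y z →
      0 ≤ (∑ x, PXgY x y * logb 2 (PXgY x y / Q z x)) ∧
        ((∑ x, PXgY x y * logb 2 (PXgY x y / Q z x)) = 0 ↔ ∀ x, Q z x = PXgY x y) := by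
    intro y z hyz
    have hPYpos : 0 < PY y := lt_of_lt_of_le hyz (hPYZ_le_PY y z)
    refine gibbs_aux (fun x => PXgY x y) (Q z) ?_ (hQnn z) ?_ (hQsum z) ?_
    · intro x
      show 0 ≤ PXgY x y
      rw [hPXgY x y hPYpos]
      exact div_nonneg (hPXYnn x y) hPYpos.le
    · calc ∑ x, PXgY x y = ∑ x, PXY x y / PY y :=
            Finset.sum_congr rfl fun x _ => hPXgY x y hPYpos
        _ = (∑ x, PXY x y) / PY y := by rw [Finset.sum_div]
        _ = 1 := by rw [← hPYsum, div_self hPYpos.ne']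
    · intro x hx
      have hx : 0 < PXgY x y := hx
      have hPXYpos : 0 < PXY x y := by
        rw [hPXgY x y hPYpos] at hx
        by_contra hc
        push_neg at hc
        have : PXY x y = 0 := le_antisymm hc (hPXYnn x y)
        rw [this] at hx
        simp at hx
      have hPpos : 0 < P x y z := by
        have hm := hMarkov x y z
        have : 0 < PXY x y * PYZ y z := mul_pos hPXYpos hyz
        nlinarith [hPnn x y z]
      exact hQpos x z (lt_of_lt_of_le hPpos (hP_le_PXZ x y z))
  -- nonnegativity of each summand
  have hnn : ∀ y z, 0 ≤ PYZ y z * ∑ x, PXgY x y * logb 2 (PXgY x y / Q z x) := by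
    intro y z
    rcases eq_or_lt_of_le (hPYZnn y z) with h | h
    · rw [← h]; simp
    · exact mul_nonneg h.le (hgibbs y z h).1
  constructor
  · intro heq y z hyz x
    have h0 : ∑ y, ∑ z, PYZ y z * ∑ x, PXgY x y * logb 2 (PXgY x y / Q z x) = 0 := by
      rw [← hdiff, heq]; ring
    have houter := (Finset.sum_eq_zero_iff_of_nonneg
      (fun y _ => Finset.sum_nonneg fun z _ => hnn y z)).mp h0 y (mem_univ y)
    have hinner := (Finset.sum_eq_zero_iff_of_nonneg
      (fun z _ => hnn y z)).mp houter z (mem_univ z)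
    have hD : (∑ x, PXgY x y * logb 2 (PXgY x y / Q z x)) = 0 := by
      rcases mul_eq_zero.mp hinner with h | h
      · exact absurd h hyz.ne'
      · exact h
    exact ((hgibbs y z hyz).2.mp hD) x
  · intro h
    have h0 : ∑ y, ∑ z, PYZ y z * ∑ x, PXgY x y * logb 2 (PXgY x y / Q z x) = 0 := by
      refine Finset.sum_eq_zero fun y _ => Finset.sum_eq_zero fun z _ => ?_
      rcases eq_or_lt_of_le (hPYZnn y z) with hyz | hyz
      · rw [← hyz]; ring
      · rw [(hgibbs y z hyz).2.mpr (h y z hyz)]; ring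
    rw [h0] at hdiff
    linarith
end

section
/- (Role model theorem, identity) If X, Y and Z form a Markov chain X–Y–Z, then the expected divergence from the a-posteriori distribution given Y to the model distribution given Z decomposes as E D(P_{X|Y}‖Q_{X|Z}) = H(X|Z) − H(X|Y) + E D(P_{X|Z}‖Q_{X|Z}), i.e., Σ_{y,z} P_{YZ}(y,z) D(P_{X|Y=y}‖Q(·|z)) = H(X|Z) − H(X|Y) + Σ_z P_Z(z) D(P_{X|Z=z}‖Q(·|z)). -/
open Finset Real

theorem stmt4 {𝒳 𝒴 𝒵 : Type*} [Fintype 𝒳] [Fintype 𝒴] [Fintype 𝒵]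
    [Nonempty 𝒳] [Nonempty 𝒴] [Nonempty 𝒵]
    (P : 𝒳 → 𝒴 → 𝒵 → ℝ)
    (hPnn : ∀ x y z, 0 ≤ P x y z)
    (hPsum : ∑ x, ∑ y, ∑ z, P x y z = 1)
    (PX : 𝒳 → ℝ) (hPX : ∀ x, PX x = ∑ y, ∑ z, P x y z)
    (PY : 𝒴 → ℝ) (hPY : ∀ y, PY y = ∑ x, ∑ z, P x y z)
    (PZ : 𝒵 → ℝ) (hPZ : ∀ z, PZ z = ∑ x, ∑ y, P x y z)
    (PXY : 𝒳 → 𝒴 → ℝ) (hPXY : ∀ x y, PXY x y = ∑ z, P x y z)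
    (PXZ : 𝒳 → 𝒵 → ℝ) (hPXZ : ∀ x z, PXZ x z = ∑ y, P x y z)
    (PYZ : 𝒴 → 𝒵 → ℝ) (hPYZ : ∀ y z, PYZ y z = ∑ x, P x y z)
    (hMarkov : ∀ x y z, P x y z * PY y = PXY x y * PYZ y z)
    (PXgY : 𝒳 → 𝒴 → ℝ) (hPXgY : ∀ x y, 0 < PY y → PXgY x y = PXY x y / PY y)
    (PXgZ : 𝒳 → 𝒵 → ℝ) (hPXgZ : ∀ x z, 0 < PZ z → PXgZ x z = PXZ x z / PZ z)
    (Q : 𝒵 → 𝒳 → ℝ)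
    (hQnn : ∀ z x, 0 ≤ Q z x)
    (hQsum : ∀ z, ∑ x, Q z x = 1)
    (hQpos : ∀ x z, 0 < PXZ x z → 0 < Q z x)
    : (∑ y, ∑ z, PYZ y z * (∑ x, PXgY x y * logb 2 (PXgY x y / Q z x)))
      = (-∑ x, ∑ z, PXZ x z * logb 2 (PXgZ x z)) - (-∑ x, ∑ y, PXY x y * logb 2 (PXgY x y))
        + ∑ z, PZ z * (∑ x, PXgZ x z * logb 2 (PXgZ x z / Q z x)) := by
  have hPXYnn : ∀ x y, 0 ≤ PXY x y := fun x y => by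
    rw [hPXY]; exact Finset.sum_nonneg fun z _ => hPnn x y z
  have hPXZnn : ∀ x z, 0 ≤ PXZ x z := fun x z => by
    rw [hPXZ]; exact Finset.sum_nonneg fun y _ => hPnn x y z
  have hPYZnn : ∀ y z, 0 ≤ PYZ y z := fun y z => by
    rw [hPYZ]; exact Finset.sum_nonneg fun x _ => hPnn x y z
  have hPle_XY : ∀ x y z, P x y z ≤ PXY x y := fun x y z => by
    rw [hPXY]; exact Finset.single_le_sum (fun z _ => hPnn x y z) (mem_univ z)
  have hPle_XZ : ∀ x y z, P x y z ≤ PXZ x z := fun x y z => by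
    rw [hPXZ]; exact Finset.single_le_sum (fun y _ => hPnn x y z) (mem_univ y)
  have hPle_YZ : ∀ x y z, P x y z ≤ PYZ y z := fun x y z => by
    rw [hPYZ]; exact Finset.single_le_sum (fun x _ => hPnn x y z) (mem_univ x)
  have hYZle_Y : ∀ y z, PYZ y z ≤ PY y := fun y z => by
    rw [hPY, hPYZ]
    exact Finset.sum_le_sum fun x _ =>
      Finset.single_le_sum (fun z _ => hPnn x y z) (mem_univ z)
  have hXZle_Z : ∀ x z, PXZ x z ≤ PZ z := fun x z => by
    rw [hPZ, hPXZ]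
    exact Finset.single_le_sum (f := fun x => ∑ y, P x y z)
      (fun x _ => Finset.sum_nonneg fun y _ => hPnn x y z) (mem_univ x)
  -- the key pointwise identity
  have tw : ∀ x y z, PYZ y z * (PXgY x y * logb 2 (PXgY x y / Q z x))
      = P x y z * logb 2 (PXgY x y) - P x y z * logb 2 (PXgZ x z)
        + P x y z * logb 2 (PXgZ x z / Q z x) := by
    intro x y z
    by_cases hP : P x y z = 0
    · rw [hP]
      simp only [zero_mul, sub_zero, add_zero, zero_sub, neg_zero, zero_add]
      by_cases hYZ : PYZ y z = 0
      · rw [hYZ, zero_mul]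
      · have hYZp : 0 < PYZ y z := lt_of_le_of_ne (hPYZnn y z) (Ne.symm hYZ)
        have hYp : 0 < PY y := lt_of_lt_of_le hYZp (hYZle_Y y z)
        by_cases hXY : PXY x y = 0
        · rw [hPXgY x y hYp, hXY, zero_div, zero_mul, mul_zero]
        · exfalso
          have hXYp : 0 < PXY x y := lt_of_le_of_ne (hPXYnn x y) (Ne.symm hXY)
          have hm := hMarkov x y z
          rw [hP, zero_mul] at hm
          exact absurd hm.symm (ne_of_gt (mul_pos hXYp hYZp))
    · have hPp : 0 < P x y z := lt_of_le_of_ne (hPnn x y z) (Ne.symm hP)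
      have hYZp : 0 < PYZ y z := lt_of_lt_of_le hPp (hPle_YZ x y z)
      have hXYp : 0 < PXY x y := lt_of_lt_of_le hPp (hPle_XY x y z)
      have hXZp : 0 < PXZ x z := lt_of_lt_of_le hPp (hPle_XZ x y z)
      have hYp : 0 < PY y := lt_of_lt_of_le hYZp (hYZle_Y y z)
      have hZp : 0 < PZ z := lt_of_lt_of_le hXZp (hXZle_Z x z)
      have hQp : 0 < Q z x := hQpos x z hXZp
      have hgY : PXgY x y = PXY x y / PY y := hPXgY x y hYp
      have hgZ : PXgZ x z = PXZ x z / PZ z := hPXgZ x z hZp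
      have hgYp : 0 < PXgY x y := by rw [hgY]; positivity
      have hgZp : 0 < PXgZ x z := by rw [hgZ]; positivity
      have hPeq : PYZ y z * PXgY x y = P x y z := by
        rw [hgY]
        have hm := hMarkov x y z
        field_simp
        linear_combination -hm
      rw [Real.logb_div (ne_of_gt hgYp) (ne_of_gt hQp),
          Real.logb_div (ne_of_gt hgZp) (ne_of_gt hQp)]
      linear_combination (logb 2 (PXgY x y) - logb 2 (Q z x)) * hPeq
  have twZ : ∀ x z, PZ z * (PXgZ x z * logb 2 (PXgZ x z / Q z x))
      = PXZ x z * logb 2 (PXgZ x z / Q z x) := by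
    intro x z
    have hPZnn : 0 ≤ PZ z := by
      rw [hPZ]
      exact Finset.sum_nonneg fun x _ => Finset.sum_nonneg fun y _ => hPnn x y z
    by_cases hZ : PZ z = 0
    · have hXZ : PXZ x z = 0 := le_antisymm (hZ ▸ hXZle_Z x z) (hPXZnn x z)
      rw [hZ, hXZ, zero_mul, zero_mul]
    · have hZp : 0 < PZ z := lt_of_le_of_ne hPZnn (Ne.symm hZ)
      rw [hPXgZ x z hZp]
      field_simp
  -- rewrite the left-hand side as a triple sum
  have hL : (∑ y, ∑ z, PYZ y z * (∑ x, PXgY x y * logb 2 (PXgY x y / Q z x)))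
      = ∑ x, ∑ y, ∑ z, (P x y z * logb 2 (PXgY x y) - P x y z * logb 2 (PXgZ x z)
          + P x y z * logb 2 (PXgZ x z / Q z x)) := by
    calc (∑ y, ∑ z, PYZ y z * (∑ x, PXgY x y * logb 2 (PXgY x y / Q z x)))
        = ∑ y, ∑ z, ∑ x, (P x y z * logb 2 (PXgY x y) - P x y z * logb 2 (PXgZ x z)
            + P x y z * logb 2 (PXgZ x z / Q z x)) := by
          refine Finset.sum_congr rfl fun y _ => Finset.sum_congr rfl fun z _ => ?_
          rw [Finset.mul_sum]
          exact Finset.sum_congr rfl fun x _ => tw x y z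
      _ = ∑ y, ∑ x, ∑ z, (P x y z * logb 2 (PXgY x y) - P x y z * logb 2 (PXgZ x z)
            + P x y z * logb 2 (PXgZ x z / Q z x)) :=
          Finset.sum_congr rfl fun y _ => Finset.sum_comm
      _ = _ := Finset.sum_comm
  have hA : (∑ x, ∑ z, PXZ x z * logb 2 (PXgZ x z))
      = ∑ x, ∑ y, ∑ z, P x y z * logb 2 (PXgZ x z) := by
    refine Finset.sum_congr rfl fun x _ => ?_
    calc (∑ z, PXZ x z * logb 2 (PXgZ x z))
        = ∑ z, ∑ y, P x y z * logb 2 (PXgZ x z) := by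
          refine Finset.sum_congr rfl fun z _ => ?_
          rw [hPXZ, Finset.sum_mul]
      _ = _ := Finset.sum_comm
  have hB : (∑ x, ∑ y, PXY x y * logb 2 (PXgY x y))
      = ∑ x, ∑ y, ∑ z, P x y z * logb 2 (PXgY x y) := by
    refine Finset.sum_congr rfl fun x _ => Finset.sum_congr rfl fun y _ => ?_
    rw [hPXY, Finset.sum_mul]
  have hC : (∑ z, PZ z * (∑ x, PXgZ x z * logb 2 (PXgZ x z / Q z x)))
      = ∑ x, ∑ y, ∑ z, P x y z * logb 2 (PXgZ x z / Q z x) := by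
    calc (∑ z, PZ z * (∑ x, PXgZ x z * logb 2 (PXgZ x z / Q z x)))
        = ∑ z, ∑ x, ∑ y, P x y z * logb 2 (PXgZ x z / Q z x) := by
          refine Finset.sum_congr rfl fun z _ => ?_
          rw [Finset.mul_sum]
          refine Finset.sum_congr rfl fun x _ => ?_
          rw [twZ x z, hPXZ, Finset.sum_mul]
      _ = ∑ x, ∑ z, ∑ y, P x y z * logb 2 (PXgZ x z / Q z x) := Finset.sum_comm
      _ = _ := Finset.sum_congr rfl fun x _ => Finset.sum_comm
  rw [hL, hA, hB, hC]
  simp only [Finset.sum_add_distrib, Finset.sum_sub_distrib]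
  ring
end

section
/- (Role model theorem, equality condition) If X, Y and Z form a Markov chain X–Y–Z, then Σ_{y,z} P_{YZ}(y,z) D(P_{X|Y=y}‖Q(·|z)) = H(X|Z) − H(X|Y) holds if and only if Q(·|z) = P_{X|Z=z} for every z ∈ 𝒵 with P_Z(z) > 0. -/
open Finset Real

lemma gibbs_key {ι : Type*} [Fintype ι] (p q : ι → ℝ)
    (hp : ∀ i, 0 ≤ p i) (hq : ∀ i, 0 ≤ q i)
    (hpq : ∀ i, 0 < p i → 0 < q i)
    (hps : ∑ i, p i = 1) (hqs : ∑ i, q i = 1) :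
    0 ≤ (∑ i, p i * Real.log (p i / q i)) ∧
      ((∑ i, p i * Real.log (p i / q i)) = 0 ↔ ∀ i, q i = p i) := by
  have key : ∀ i, p i - q i ≤ p i * Real.log (p i / q i) := by
    intro i
    rcases (hp i).eq_or_lt with h | h
    · rw [← h, zero_sub, zero_mul]; linarith [hq i]
    · have hqi := hpq i h
      have hlog := Real.log_le_sub_one_of_pos (div_pos hqi h)
      have hinv : Real.log (p i / q i) = - Real.log (q i / p i) := by
        rw [← Real.log_inv, inv_div]
      have hc : p i * (q i / p i) = q i := by field_simp
      have h2 := mul_le_mul_of_nonneg_left hlog h.le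
      rw [hinv]; nlinarith [h2]
  have hg : ∑ i, (p i - q i) = (0:ℝ) := by
    rw [Finset.sum_sub_distrib, hps, hqs, sub_self]
  have hle : (0:ℝ) ≤ ∑ i, p i * Real.log (p i / q i) := by
    rw [← hg]; exact Finset.sum_le_sum fun i _ => key i
  refine ⟨hle, ?_, ?_⟩
  · intro h0
    have heq : ∀ i ∈ Finset.univ, p i - q i = p i * Real.log (p i / q i) :=
      (Finset.sum_eq_sum_iff_of_le (fun i _ => key i)).1 (by rw [hg, h0])
    intro i
    have hi := heq i (Finset.mem_univ i)
    rcases (hp i).eq_or_lt with h | h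
    · rw [← h, zero_sub, zero_mul] at hi; rw [← h]; linarith
    · by_contra hne
      have hqi := hpq i h
      have hne1 : q i / p i ≠ 1 := by
        intro hc; apply hne; field_simp at hc; linarith
      have hlog := Real.log_lt_sub_one_of_pos (div_pos hqi h) hne1
      have hinv : Real.log (p i / q i) = - Real.log (q i / p i) := by
        rw [← Real.log_inv, inv_div]
      have hc : p i * (q i / p i) = q i := by field_simp
      rw [hinv] at hi
      nlinarith [mul_lt_mul_of_pos_left hlog h]
  · intro h
    apply Finset.sum_eq_zero
    intro i _
    rcases (hp i).eq_or_lt with h0 | h0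
    · rw [← h0, zero_mul]
    · rw [h i, div_self h0.ne', Real.log_one, mul_zero]

theorem stmt6 {𝒳 𝒴 𝒵 : Type*} [Fintype 𝒳] [Fintype 𝒴] [Fintype 𝒵]
    [Nonempty 𝒳] [Nonempty 𝒴] [Nonempty 𝒵]
    (P : 𝒳 → 𝒴 → 𝒵 → ℝ)
    (hPnn : ∀ x y z, 0 ≤ P x y z)
    (hPsum : ∑ x, ∑ y, ∑ z, P x y z = 1)
    (PX : 𝒳 → ℝ) (hPX : ∀ x, PX x = ∑ y, ∑ z, P x y z)
    (PY : 𝒴 → ℝ) (hPY : ∀ y, PY y = ∑ x, ∑ z, P x y z)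
    (PZ : 𝒵 → ℝ) (hPZ : ∀ z, PZ z = ∑ x, ∑ y, P x y z)
    (PXY : 𝒳 → 𝒴 → ℝ) (hPXY : ∀ x y, PXY x y = ∑ z, P x y z)
    (PXZ : 𝒳 → 𝒵 → ℝ) (hPXZ : ∀ x z, PXZ x z = ∑ y, P x y z)
    (PYZ : 𝒴 → 𝒵 → ℝ) (hPYZ : ∀ y z, PYZ y z = ∑ x, P x y z)
    (hMarkov : ∀ x y z, P x y z * PY y = PXY x y * PYZ y z)
    (PXgY : 𝒳 → 𝒴 → ℝ) (hPXgY : ∀ x y, 0 < PY y → PXgY x y = PXY x y / PY y)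
    (PXgZ : 𝒳 → 𝒵 → ℝ) (hPXgZ : ∀ x z, 0 < PZ z → PXgZ x z = PXZ x z / PZ z)
    (Q : 𝒵 → 𝒳 → ℝ)
    (hQnn : ∀ z x, 0 ≤ Q z x)
    (hQsum : ∀ z, ∑ x, Q z x = 1)
    (hQpos : ∀ x z, 0 < PXZ x z → 0 < Q z x)
    : ((∑ y, ∑ z, PYZ y z * (∑ x, PXgY x y * logb 2 (PXgY x y / Q z x))) = (-∑ x, ∑ z, PXZ x z * logb 2 (PXgZ x z)) - (-∑ x, ∑ y, PXY x y * logb 2 (PXgY x y)))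
      ↔ ∀ z, 0 < PZ z → ∀ x, Q z x = PXgZ x z := by
  classical
  have hlog2 : (0:ℝ) < Real.log 2 := Real.log_pos (by norm_num)
  -- basic nonnegativity
  have hPXYnn : ∀ x y, 0 ≤ PXY x y := fun x y => by
    rw [hPXY]; exact Finset.sum_nonneg fun z _ => hPnn x y z
  have hPXZnn : ∀ x z, 0 ≤ PXZ x z := fun x z => by
    rw [hPXZ]; exact Finset.sum_nonneg fun y _ => hPnn x y z
  have hPYZnn : ∀ y z, 0 ≤ PYZ y z := fun y z => by
    rw [hPYZ]; exact Finset.sum_nonneg fun x _ => hPnn x y z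
  have hPYnn : ∀ y, 0 ≤ PY y := fun y => by
    rw [hPY]; exact Finset.sum_nonneg fun x _ => Finset.sum_nonneg fun z _ => hPnn x y z
  have hPZnn : ∀ z, 0 ≤ PZ z := fun z => by
    rw [hPZ]; exact Finset.sum_nonneg fun x _ => Finset.sum_nonneg fun y _ => hPnn x y z
  -- marginal identities
  have hPYsum : ∀ y, PY y = ∑ z, PYZ y z := fun y => by
    rw [hPY, Finset.sum_comm]
    exact Finset.sum_congr rfl fun z _ => (hPYZ y z).symm
  have hPZsum : ∀ z, PZ z = ∑ x, PXZ x z := fun z => by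
    rw [hPZ]
    exact Finset.sum_congr rfl fun x _ => (hPXZ x z).symm
  -- pointwise bounds
  have hP_le_PXY : ∀ x y z, P x y z ≤ PXY x y := fun x y z => by
    rw [hPXY]; exact Finset.single_le_sum (fun z _ => hPnn x y z) (Finset.mem_univ z)
  have hP_le_PXZ : ∀ x y z, P x y z ≤ PXZ x z := fun x y z => by
    rw [hPXZ]; exact Finset.single_le_sum (fun y _ => hPnn x y z) (Finset.mem_univ y)
  have hP_le_PYZ : ∀ x y z, P x y z ≤ PYZ y z := fun x y z => by
    rw [hPYZ]; exact Finset.single_le_sum (fun x _ => hPnn x y z) (Finset.mem_univ x)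
  have hPYZ_le_PY : ∀ y z, PYZ y z ≤ PY y := fun y z => by
    rw [hPYsum]; exact Finset.single_le_sum (fun z _ => hPYZnn y z) (Finset.mem_univ z)
  have hPXZ_le_PZ : ∀ x z, PXZ x z ≤ PZ z := fun x z => by
    rw [hPZsum]; exact Finset.single_le_sum (fun x _ => hPXZnn x z) (Finset.mem_univ x)
  -- Step 1: pointwise identity inside the LHS
  have step1 : ∀ y z x, PYZ y z * (PXgY x y * logb 2 (PXgY x y / Q z x))
      = P x y z * logb 2 (PXgY x y) - P x y z * logb 2 (Q z x) := by
    intro y z x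
    rcases (hPYnn y).eq_or_lt with hy | hy
    · have h1 : PYZ y z = 0 := le_antisymm (hy ▸ hPYZ_le_PY y z) (hPYZnn y z)
      have h2 : P x y z = 0 := le_antisymm (h1 ▸ hP_le_PYZ x y z) (hPnn x y z)
      rw [h1, h2]; ring
    · have hP' : P x y z = PXgY x y * PYZ y z := by
        rw [hPXgY x y hy, div_mul_eq_mul_div, ← hMarkov x y z, mul_div_assoc,
          div_self hy.ne', mul_one]
      rcases (hPnn x y z).eq_or_lt with hp | hp
      · have h0 : PYZ y z * (PXgY x y * logb 2 (PXgY x y / Q z x))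
            = P x y z * logb 2 (PXgY x y / Q z x) := by rw [hP']; ring
        rw [h0, ← hp]; ring
      · have hxy : 0 < PXY x y := lt_of_lt_of_le hp (hP_le_PXY x y z)
        have hxz : 0 < PXZ x z := lt_of_lt_of_le hp (hP_le_PXZ x y z)
        have hq : 0 < Q z x := hQpos x z hxz
        have hpg : 0 < PXgY x y := by rw [hPXgY x y hy]; positivity
        rw [Real.logb_div hpg.ne' hq.ne', hP']; ring
  -- Step 2: rewriting the big LHS sum
  have e1 : ∑ y, ∑ z, ∑ x, P x y z * logb 2 (PXgY x y)
      = ∑ x, ∑ y, PXY x y * logb 2 (PXgY x y) := by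
    calc ∑ y, ∑ z, ∑ x, P x y z * logb 2 (PXgY x y)
        = ∑ y, ∑ x, ∑ z, P x y z * logb 2 (PXgY x y) :=
          Finset.sum_congr rfl fun y _ => Finset.sum_comm
      _ = ∑ x, ∑ y, ∑ z, P x y z * logb 2 (PXgY x y) := Finset.sum_comm
      _ = ∑ x, ∑ y, PXY x y * logb 2 (PXgY x y) := by
          refine Finset.sum_congr rfl fun x _ => Finset.sum_congr rfl fun y _ => ?_
          rw [← Finset.sum_mul, ← hPXY]
  have e2 : ∑ y, ∑ z, ∑ x, P x y z * logb 2 (Q z x)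
      = ∑ x, ∑ z, PXZ x z * logb 2 (Q z x) := by
    calc ∑ y, ∑ z, ∑ x, P x y z * logb 2 (Q z x)
        = ∑ y, ∑ x, ∑ z, P x y z * logb 2 (Q z x) :=
          Finset.sum_congr rfl fun y _ => Finset.sum_comm
      _ = ∑ x, ∑ y, ∑ z, P x y z * logb 2 (Q z x) := Finset.sum_comm
      _ = ∑ x, ∑ z, ∑ y, P x y z * logb 2 (Q z x) :=
          Finset.sum_congr rfl fun x _ => Finset.sum_comm
      _ = ∑ x, ∑ z, PXZ x z * logb 2 (Q z x) := by
          refine Finset.sum_congr rfl fun x _ => Finset.sum_congr rfl fun z _ => ?_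
          rw [← Finset.sum_mul, ← hPXZ]
  have hLHS : (∑ y, ∑ z, PYZ y z * (∑ x, PXgY x y * logb 2 (PXgY x y / Q z x)))
      = (∑ x, ∑ y, PXY x y * logb 2 (PXgY x y)) - ∑ x, ∑ z, PXZ x z * logb 2 (Q z x) := by
    have h1 : (∑ y, ∑ z, PYZ y z * (∑ x, PXgY x y * logb 2 (PXgY x y / Q z x)))
        = ∑ y, ∑ z, ∑ x, (P x y z * logb 2 (PXgY x y) - P x y z * logb 2 (Q z x)) := by
      refine Finset.sum_congr rfl fun y _ => Finset.sum_congr rfl fun z _ => ?_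
      rw [Finset.mul_sum]
      exact Finset.sum_congr rfl fun x _ => step1 y z x
    rw [h1, ← e1, ← e2]
    simp [Finset.sum_sub_distrib]
  -- the deficiency terms
  set D : 𝒵 → ℝ := fun z => ∑ x, (PXZ x z * logb 2 (PXgZ x z) - PXZ x z * logb 2 (Q z x))
    with hDdef
  have hDsum : ∑ z, D z
      = (∑ x, ∑ z, PXZ x z * logb 2 (PXgZ x z)) - ∑ x, ∑ z, PXZ x z * logb 2 (Q z x) := by
    rw [hDdef]
    rw [show (∑ z, ∑ x, (PXZ x z * logb 2 (PXgZ x z) - PXZ x z * logb 2 (Q z x)))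
        = ∑ x, ∑ z, (PXZ x z * logb 2 (PXgZ x z) - PXZ x z * logb 2 (Q z x)) from
      Finset.sum_comm]
    simp [Finset.sum_sub_distrib]
  -- key facts about D
  have hfacts : ∀ z, 0 ≤ D z ∧ (D z = 0 ↔ (0 < PZ z → ∀ x, Q z x = PXgZ x z)) := by
    intro z
    rcases (hPZnn z).eq_or_lt with hz | hz
    · have hz0 : ∀ x, PXZ x z = 0 := fun x =>
        le_antisymm (hz ▸ hPXZ_le_PZ x z) (hPXZnn x z)
      have hD0 : D z = 0 := by
        rw [hDdef]
        exact Finset.sum_eq_zero fun x _ => by rw [hz0 x]; ring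
      refine ⟨hD0.ge, ?_⟩
      constructor
      · intro _ h; exact absurd h (by rw [← hz]; exact lt_irrefl 0)
      · intro _; exact hD0
    · set p : 𝒳 → ℝ := fun x => PXZ x z / PZ z with hpdef
      have hps : ∑ x, p x = 1 := by
        rw [hpdef]
        rw [← Finset.sum_div, ← hPZsum z, div_self hz.ne']
      have hpnn : ∀ x, 0 ≤ p x := fun x => div_nonneg (hPXZnn x z) hz.le
      have hppos : ∀ x, 0 < p x → 0 < Q z x := by
        intro x hx
        apply hQpos x z
        by_contra hle
        push_neg at hle
        have : PXZ x z = 0 := le_antisymm hle (hPXZnn x z)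
        rw [hpdef] at hx; simp only at hx
        rw [this, zero_div] at hx; exact lt_irrefl 0 hx
      obtain ⟨hGnn, hGiff⟩ := gibbs_key p (Q z) hpnn (hQnn z) hppos hps (hQsum z)
      have hDeq : D z = (PZ z / Real.log 2) * ∑ x, p x * Real.log (p x / Q z x) := by
        rw [hDdef, Finset.mul_sum]
        refine Finset.sum_congr rfl fun x _ => ?_
        rcases (hPXZnn x z).eq_or_lt with hx | hx
        · have hpx : p x = 0 := by rw [hpdef]; simp [← hx]
          rw [← hx, hpx]; ring
        · have hq : 0 < Q z x := hQpos x z hx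
          have hpx : 0 < p x := div_pos hx hz
          have hPXZx : PXZ x z = PZ z * p x := by rw [hpdef]; field_simp
          rw [hPXgZ x z hz]
          show PXZ x z * Real.logb 2 (p x) - PXZ x z * Real.logb 2 (Q z x)
            = PZ z / Real.log 2 * (p x * Real.log (p x / Q z x))
          rw [Real.logb, Real.logb, Real.log_div hpx.ne' hq.ne', hPXZx]
          field_simp
      constructor
      · rw [hDeq]; positivity
      · rw [hDeq]
        constructor
        · intro h0 _ x
          have hfac : PZ z / Real.log 2 ≠ 0 := by positivity
          have := (mul_eq_zero.1 h0).resolve_left hfac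
          exact (hGiff.1 this x).trans (hPXgZ x z hz).symm
        · intro h
          have : ∀ x, Q z x = p x := by
            intro x
            rw [h hz x, hPXgZ x z hz]
          rw [hGiff.2 this, mul_zero]
  -- conclude
  rw [hLHS]
  have hiff1 : ((∑ x, ∑ y, PXY x y * logb 2 (PXgY x y)) - ∑ x, ∑ z, PXZ x z * logb 2 (Q z x)
      = (-∑ x, ∑ z, PXZ x z * logb 2 (PXgZ x z)) - (-∑ x, ∑ y, PXY x y * logb 2 (PXgY x y)))
      ↔ ∑ z, D z = 0 := by
    rw [hDsum]; constructor <;> intro h <;> linarith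
  rw [hiff1, Finset.sum_eq_zero_iff_of_nonneg (fun z _ => (hfacts z).1)]
  constructor
  · intro h z hz x
    exact ((hfacts z).2.1 (h z (Finset.mem_univ z))) hz x
  · intro h z _
    exact (hfacts z).2.2 (fun hz x => h z hz x)
end

section
/- Under the Markov chain X–Y–Z, the mixed information is bounded above by the minimum of the two mutual informations: I'(X;Z) ≤ min(I(X;Y), I(X;Z)). -/
/-!
Write `I'(X;Z) - I(X;Z)` as `∑ P(x,z) log (P(z) Q(x|z) / P(x,z))`. By `log t ≤ t - 1` this is at
most `∑ P(z) Q(x|z) - ∑ P(x,z) = 0`, because `Q(·|z)` is a probability distribution: the mixed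
information never exceeds the mutual information. Applied to the pair `(X, (Y,Z))` with the
kernel `Q(x|y,z) := Q(x|z)`, the same inequality gives `I'(X;Z) ≤ I(X;Y,Z)`, and under the Markov
condition `P(x,y,z) / P(y,z) = P(x,y) / P(y)`, so `I(X;Y,Z) = I(X;Y)`.
-/

open Finset Real

section

variable {α β γ : Type*} [Fintype α] [Fintype β] [Fintype γ]

noncomputable def mutualInfo (p : α → β → ℝ) (pa : α → ℝ) (pb : β → ℝ) : ℝ :=
  ∑ a, ∑ b, p a b * logb 2 (p a b / (pa a * pb b))

noncomputable def mixedInfo (p : α → β → ℝ) (pa : α → ℝ) (q : β → α → ℝ) : ℝ :=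
  ∑ a, ∑ b, p a b * logb 2 (q b a / pa a)

lemma mul_logb_div_le_sub_div_log {B a b : ℝ} (hB : 1 < B) (ha : 0 ≤ a) (hb : 0 ≤ b)
    (hab : 0 < a → 0 < b) : a * logb B (b / a) ≤ (b - a) / log B := by
  have hlogB : 0 < log B := log_pos hB
  obtain rfl | ha := ha.eq_or_lt
  · simpa using div_nonneg hb hlogB.le
  calc a * logb B (b / a) = a * log (b / a) / log B := by rw [logb, mul_div_assoc]
    _ ≤ a * (b / a - 1) / log B := by
      gcongr
      exact log_le_sub_one_of_pos (div_pos (hab ha) ha)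
    _ = (b - a) / log B := by field_simp

lemma mixedInfo_le_mutualInfo {p : α → β → ℝ} {pa : α → ℝ} {pb : β → ℝ} {q : β → α → ℝ}
    (hp : ∀ a b, 0 ≤ p a b) (hpa : ∀ a, pa a = ∑ b, p a b) (hpb : ∀ b, pb b = ∑ a, p a b)
    (hq : ∀ b a, 0 ≤ q b a) (hqsum : ∀ b, ∑ a, q b a = 1)
    (hqpos : ∀ a b, 0 < p a b → 0 < q b a) :
    mixedInfo p pa q ≤ mutualInfo p pa pb := by
  have hpb_nonneg : ∀ b, 0 ≤ pb b := fun b => hpb b ▸ sum_nonneg fun a _ => hp a b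
  have term_le : ∀ a b, p a b * logb 2 (q b a / pa a) - p a b * logb 2 (p a b / (pa a * pb b)) ≤
      (pb b * q b a - p a b) / log 2 := by
    intro a b
    obtain h0 | hpos := (hp a b).eq_or_lt
    · rw [← h0]
      simpa using div_nonneg (mul_nonneg (hpb_nonneg b) (hq b a)) (log_pos one_lt_two).le
    have hpa_pos : 0 < pa a := hpa a ▸ sum_pos' (fun b _ => hp a b) ⟨b, mem_univ b, hpos⟩
    have hpb_pos : 0 < pb b := hpb b ▸ sum_pos' (fun a _ => hp a b) ⟨a, mem_univ a, hpos⟩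
    have hq_pos := hqpos a b hpos
    have hlog : logb 2 (q b a / pa a) - logb 2 (p a b / (pa a * pb b)) =
        logb 2 (pb b * q b a / p a b) := by
      rw [← logb_div (by positivity) (by positivity)]
      congr 1
      field_simp
    rw [← mul_sub, hlog]
    exact mul_logb_div_le_sub_div_log one_lt_two hpos.le (by positivity) fun _ => by positivity
  have hmass : ∑ a, ∑ b, pb b * q b a = ∑ a, ∑ b, p a b := by
    rw [sum_comm]
    simp_rw [← mul_sum, hqsum, mul_one, hpb]
    exact sum_comm
  rw [← sub_nonpos, mixedInfo, mutualInfo, ← sum_sub_distrib]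
  calc ∑ a, ((∑ b, p a b * logb 2 (q b a / pa a)) - ∑ b, p a b * logb 2 (p a b / (pa a * pb b)))
      ≤ ∑ a, ∑ b, (pb b * q b a - p a b) / log 2 := by
        gcongr with a
        rw [← sum_sub_distrib]
        exact sum_le_sum fun b _ => term_le a b
    _ = 0 := by simp_rw [← sum_div, sum_sub_distrib, hmass, sub_self, zero_div]

lemma mixedInfo_prod_eq {p : α → β → γ → ℝ} {pa : α → ℝ} {pac : α → γ → ℝ} {q : γ → α → ℝ}
    (hpac : ∀ a c, pac a c = ∑ b, p a b c) :
    mixedInfo (fun a (bc : β × γ) => p a bc.1 bc.2) pa (fun bc a => q bc.2 a) =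
      mixedInfo pac pa q := by
  refine sum_congr rfl fun a _ => ?_
  rw [Fintype.sum_prod_type, sum_comm]
  simp_rw [hpac, sum_mul]

lemma mutualInfo_prod_eq_of_markov {p : α → β → γ → ℝ} {pa : α → ℝ} {pb : β → ℝ}
    {pab : α → β → ℝ} {pbc : β → γ → ℝ} (hp : ∀ a b c, 0 ≤ p a b c)
    (hpb : ∀ b, pb b = ∑ a, ∑ c, p a b c) (hpab : ∀ a b, pab a b = ∑ c, p a b c)
    (hpbc : ∀ b c, pbc b c = ∑ a, p a b c)
    (hMarkov : ∀ a b c, p a b c * pb b = pab a b * pbc b c) :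
    mutualInfo (fun a (bc : β × γ) => p a bc.1 bc.2) pa (fun bc => pbc bc.1 bc.2) =
      mutualInfo pab pa pb := by
  refine sum_congr rfl fun a _ => ?_
  rw [Fintype.sum_prod_type]
  refine sum_congr rfl fun b _ => ?_
  rw [hpab, sum_mul]
  refine sum_congr rfl fun c _ => ?_
  obtain h0 | hpos := (hp a b c).eq_or_lt
  · simp [← h0]
  have hpbc_pos : 0 < pbc b c := hpbc b c ▸ sum_pos' (fun a _ => hp a b c) ⟨a, mem_univ a, hpos⟩
  have hpb_pos : 0 < pb b := hpb b ▸ sum_pos' (fun a _ => sum_nonneg fun c _ => hp a b c)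
    ⟨a, mem_univ a, sum_pos' (fun c _ => hp a b c) ⟨c, mem_univ c, hpos⟩⟩
  rw [← hpab, div_mul_eq_div_div_swap, div_mul_eq_div_div_swap,
    div_eq_div_iff hpbc_pos.ne' hpb_pos.ne' |>.mpr (hMarkov a b c)]

end

theorem stmt9_general {𝒳 𝒴 𝒵 : Type*} [Fintype 𝒳] [Fintype 𝒴] [Fintype 𝒵]
    (P : 𝒳 → 𝒴 → 𝒵 → ℝ)
    (hPnn : ∀ x y z, 0 ≤ P x y z)
    (PX : 𝒳 → ℝ) (hPX : ∀ x, PX x = ∑ y, ∑ z, P x y z)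
    (PY : 𝒴 → ℝ) (hPY : ∀ y, PY y = ∑ x, ∑ z, P x y z)
    (PZ : 𝒵 → ℝ) (hPZ : ∀ z, PZ z = ∑ x, ∑ y, P x y z)
    (PXY : 𝒳 → 𝒴 → ℝ) (hPXY : ∀ x y, PXY x y = ∑ z, P x y z)
    (PXZ : 𝒳 → 𝒵 → ℝ) (hPXZ : ∀ x z, PXZ x z = ∑ y, P x y z)
    (PYZ : 𝒴 → 𝒵 → ℝ) (hPYZ : ∀ y z, PYZ y z = ∑ x, P x y z)
    (hMarkov : ∀ x y z, P x y z * PY y = PXY x y * PYZ y z)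
    (Q : 𝒵 → 𝒳 → ℝ)
    (hQnn : ∀ z x, 0 ≤ Q z x)
    (hQsum : ∀ z, ∑ x, Q z x = 1)
    (hQpos : ∀ x z, 0 < PXZ x z → 0 < Q z x)
    : (∑ x, ∑ z, PXZ x z * logb 2 (Q z x / PX x)) ≤ min (∑ x, ∑ y, PXY x y * logb 2 (PXY x y / (PX x * PY y))) (∑ x, ∑ z, PXZ x z * logb 2 (PXZ x z / (PX x * PZ z))) := by
  have hPXZnn : ∀ x z, 0 ≤ PXZ x z := fun x z => hPXZ x z ▸ sum_nonneg fun y _ => hPnn x y z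
  have hPX_XZ : ∀ x, PX x = ∑ z, PXZ x z := fun x => by simp_rw [hPX, hPXZ]; exact sum_comm
  have hPZ_XZ : ∀ z, PZ z = ∑ x, PXZ x z := fun z => by simp_rw [hPZ, hPXZ]
  have hPX_XYZ : ∀ x, PX x = ∑ yz : 𝒴 × 𝒵, P x yz.1 yz.2 := fun x => by
    rw [hPX, Fintype.sum_prod_type]
  have hQpos_XYZ : ∀ x (yz : 𝒴 × 𝒵), 0 < P x yz.1 yz.2 → 0 < Q yz.2 x := fun x yz h =>
    hQpos x yz.2 <| hPXZ x yz.2 ▸ sum_pos' (fun y _ => hPnn x y yz.2) ⟨yz.1, mem_univ _, h⟩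
  show mixedInfo PXZ PX Q ≤ min (mutualInfo PXY PX PY) (mutualInfo PXZ PX PZ)
  refine le_min ?_ (mixedInfo_le_mutualInfo hPXZnn hPX_XZ hPZ_XZ hQnn hQsum hQpos)
  calc mixedInfo PXZ PX Q
      = mixedInfo (fun x (yz : 𝒴 × 𝒵) => P x yz.1 yz.2) PX (fun yz x => Q yz.2 x) :=
        (mixedInfo_prod_eq hPXZ).symm
    _ ≤ mutualInfo (fun x (yz : 𝒴 × 𝒵) => P x yz.1 yz.2) PX (fun yz => PYZ yz.1 yz.2) :=
        mixedInfo_le_mutualInfo (fun x yz => hPnn x yz.1 yz.2) hPX_XYZ (fun yz => hPYZ yz.1 yz.2)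
          (fun yz x => hQnn yz.2 x) (fun yz => hQsum yz.2) hQpos_XYZ
    _ = mutualInfo PXY PX PY := mutualInfo_prod_eq_of_markov hPnn hPY hPXY hPYZ hMarkov

theorem stmt9 {𝒳 𝒴 𝒵 : Type*} [Fintype 𝒳] [Fintype 𝒴] [Fintype 𝒵]
    [Nonempty 𝒳] [Nonempty 𝒴] [Nonempty 𝒵]
    (P : 𝒳 → 𝒴 → 𝒵 → ℝ)
    (hPnn : ∀ x y z, 0 ≤ P x y z)
    (hPsum : ∑ x, ∑ y, ∑ z, P x y z = 1)
    (PX : 𝒳 → ℝ) (hPX : ∀ x, PX x = ∑ y, ∑ z, P x y z)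
    (PY : 𝒴 → ℝ) (hPY : ∀ y, PY y = ∑ x, ∑ z, P x y z)
    (PZ : 𝒵 → ℝ) (hPZ : ∀ z, PZ z = ∑ x, ∑ y, P x y z)
    (PXY : 𝒳 → 𝒴 → ℝ) (hPXY : ∀ x y, PXY x y = ∑ z, P x y z)
    (PXZ : 𝒳 → 𝒵 → ℝ) (hPXZ : ∀ x z, PXZ x z = ∑ y, P x y z)
    (PYZ : 𝒴 → 𝒵 → ℝ) (hPYZ : ∀ y z, PYZ y z = ∑ x, P x y z)
    (hMarkov : ∀ x y z, P x y z * PY y = PXY x y * PYZ y z)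
    (Q : 𝒵 → 𝒳 → ℝ)
    (hQnn : ∀ z x, 0 ≤ Q z x)
    (hQsum : ∀ z, ∑ x, Q z x = 1)
    (hQpos : ∀ x z, 0 < PXZ x z → 0 < Q z x)
    : (∑ x, ∑ z, PXZ x z * logb 2 (Q z x / PX x)) ≤ min (∑ x, ∑ y, PXY x y * logb 2 (PXY x y / (PX x * PY y))) (∑ x, ∑ z, PXZ x z * logb 2 (PXZ x z / (PX x * PZ z))) :=
  stmt9_general P hPnn PX hPX PY hPY PZ hPZ PXY hPXY PXZ hPXZ PYZ hPYZ hMarkov Q hQnn hQsum hQpos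
end
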